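/- Let (A, ρ, [.,.], η) be a contact Lie algebroid with associated Jacobi structure (Π, ξ). Then ♯_{Π,ξ}(η) = ξ and ♯_{Π,ξ}([α,β]^η_{Π,ξ}) = [♯_{Π,ξ}(α), ♯_{Π,ξ}(β)] for all α, β; hence (A*, ρ_{Π,ξ}, [.,.]^η_{Π,ξ}) is a Lie algebroid isomorphic to (A, ρ, [.,.]) via ♯_{Π,ξ}. -/

import Mathlib

/-!
The map `e : a ↦ -ι_a dη + η(a) η` is the flat isomorphism of the almost cosymplectic
structure `(dη, η)`, and `♯_{Π,ξ}` is its inverse. Written through `♯_{Π,ξ}`, the `L_ξ`-terms of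
`[.,.]^η_{Π,ξ}` cancel, and on `e a, e b` what remains is `e [a,b]` by Cartan calculus and
`d(dη) = 0`. So `[.,.]^η_{Π,ξ}` is the bracket of `A` transported along `e`, and all three
claims follow from `♯_{Π,ξ} = e⁻¹` and the Jacobi identity in `A`.
-/

/-- Algebraic model of a skew algebroid over a base manifold: `R` plays the role of
the ring of smooth functions, `G` the module of sections of the anchored bundle,
`bracket` the skew-symmetric bracket satisfying the Leibniz rule, and `anchor`
gives the action of sections on functions by derivations. -/
structure SkewAlgebroid (R : Type*) [CommRing R] (G : Type*)
    [AddCommGroup G] [Module R G] where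
  bracket : G → G → G
  anchor : G → R → R
  bracket_add_left : ∀ a b c, bracket (a + b) c = bracket a c + bracket b c
  bracket_skew : ∀ a b, bracket a b = - bracket b a
  anchor_add : ∀ a b φ, anchor (a + b) φ = anchor a φ + anchor b φ
  anchor_smul : ∀ (φ : R) a ψ, anchor (φ • a) ψ = φ * anchor a ψ
  anchor_map_add : ∀ a φ ψ, anchor a (φ + ψ) = anchor a φ + anchor a ψ
  anchor_map_mul : ∀ a φ ψ, anchor a (φ * ψ) = φ * anchor a ψ + ψ * anchor a φ
  leibniz : ∀ a (φ : R) b, bracket a (φ • b) = φ • bracket a b + anchor a φ • b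

namespace SkewAlgebroid

variable {R : Type*} [CommRing R] {G : Type*} [AddCommGroup G] [Module R G]

/-- The bivector field associated to a sharp map `♯ : A* → A`: `Π(α,β) = β(♯α)`. -/
def biv (sharp : (G →ₗ[R] R) → G) (α β : G →ₗ[R] R) : R := β (sharp α)

/-- `♯_{Π,ξ}(α) = ♯_Π(α) + α(ξ)ξ`. -/
def sharpJ (sharp : (G →ₗ[R] R) → G) (ξ : G) (α : G →ₗ[R] R) : G := sharp α + α ξ • ξ

/-- `(ξ ∧ Π)(α,β,γ)`. -/
def wedgeVB (ξ : G) (sharp : (G →ₗ[R] R) → G) (α β γ : G →ₗ[R] R) : R :=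
  α ξ * biv sharp β γ - β ξ * biv sharp α γ + γ ξ * biv sharp α β

variable (S : SkewAlgebroid R G)

lemma bracket_add_right (a b c : G) :
    S.bracket a (b + c) = S.bracket a b + S.bracket a c := by
  rw [S.bracket_skew a (b + c), S.bracket_add_left, S.bracket_skew b a, S.bracket_skew c a]
  abel

/-- The Lie `A`-derivative of a 1-form along a section. -/
def lieDeriv (a : G) (α : G →ₗ[R] R) : G →ₗ[R] R where
  toFun b := S.anchor a (α b) - α (S.bracket a b)
  map_add' b c := by
    rw [map_add, S.anchor_map_add, S.bracket_add_right, map_add]; ring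
  map_smul' φ b := by
    rw [map_smul, smul_eq_mul, S.anchor_map_mul, S.leibniz, map_add, map_smul, map_smul,
      smul_eq_mul, smul_eq_mul, RingHom.id_apply, smul_eq_mul]
    ring

/-- The exterior `A`-differential of a function, as a 1-form. -/
def dform (φ : R) : G →ₗ[R] R where
  toFun a := S.anchor a φ
  map_add' a b := S.anchor_add a b φ
  map_smul' c a := by rw [S.anchor_smul]; rfl

/-- The exterior `A`-differential of a 1-form. -/
def dOne (η : G →ₗ[R] R) (a b : G) : R :=
  S.anchor a (η b) - S.anchor b (η a) - η (S.bracket a b)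

/-- The exterior `A`-differential of a 2-form. -/
def dTwo (Ω : G →ₗ[R] G →ₗ[R] R) (a b c : G) : R :=
  S.anchor a (Ω b c) - S.anchor b (Ω a c) + S.anchor c (Ω a b)
    - Ω (S.bracket a b) c + Ω (S.bracket a c) b - Ω (S.bracket b c) a

/-- The Lie `A`-derivative of a 2-form along a section. -/
def lieTwo (ξ : G) (Ω : G →ₗ[R] G →ₗ[R] R) (a b : G) : R :=
  S.anchor ξ (Ω a b) - Ω (S.bracket ξ a) b - Ω a (S.bracket ξ b)

/-- The Koszul bracket of 1-forms associated with the bivector field given by `sharp`: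
`[α,β]_Π = L_{♯α}β − L_{♯β}α − d_ρ(Π(α,β))`. -/
def koszul (sharp : (G →ₗ[R] R) → G) (α β : G →ₗ[R] R) : G →ₗ[R] R :=
  S.lieDeriv (sharp α) β - S.lieDeriv (sharp β) α - S.dform (biv sharp α β)

/-- The Schouten–Nijenhuis bracket `[Π,Π]`, defined (as in the contravariant calculus)
by `[Π,Π] = −d_{ρ_Π}Π` via the structure `(ρ_Π, [.,.]_Π)` on the dual. -/
def schouten (sharp : (G →ₗ[R] R) → G) (α β γ : G →ₗ[R] R) : R :=
  -(S.anchor (sharp α) (biv sharp β γ) - S.anchor (sharp β) (biv sharp α γ)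
      + S.anchor (sharp γ) (biv sharp α β)
      - biv sharp (S.koszul sharp α β) γ + biv sharp (S.koszul sharp α γ) β
      - biv sharp (S.koszul sharp β γ) α)

/-- The Lie `A`-derivative `L^ρ_ξ Π` of the bivector field. -/
def lieBiv (ξ : G) (sharp : (G →ₗ[R] R) → G) (α β : G →ₗ[R] R) : R :=
  S.anchor ξ (biv sharp α β) - biv sharp (S.lieDeriv ξ α) β - biv sharp α (S.lieDeriv ξ β)

/-- The deformed dual bracket `[α,β]^λ_{Π,ξ}`. -/
def bracketJ (sharp : (G →ₗ[R] R) → G) (ξ : G) (lam : G →ₗ[R] R) (α β : G →ₗ[R] R) :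
    G →ₗ[R] R :=
  S.koszul sharp α β + α ξ • (S.lieDeriv ξ β - β) - β ξ • (S.lieDeriv ξ α - α)
    - biv sharp α β • lam

/-- The anchor is a bracket morphism (almost Lie algebroid condition). -/
def IsAlmostLie : Prop := ∀ a b φ,
  S.anchor (S.bracket a b) φ = S.anchor a (S.anchor b φ) - S.anchor b (S.anchor a φ)

/-- The Jacobi identity for the bracket (Lie algebroid condition). -/
def IsJacobi : Prop := ∀ a b c,
  S.bracket (S.bracket a b) c + S.bracket (S.bracket b c) a + S.bracket (S.bracket c a) b = 0

end SkewAlgebroid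

namespace SkewAlgebroid

variable {R : Type*} [CommRing R] {G : Type*} [AddCommGroup G] [Module R G]
variable (S : SkewAlgebroid R G)

lemma anchor_map_neg (a : G) (φ : R) : S.anchor a (-φ) = -S.anchor a φ :=
  (AddMonoidHom.mk' (S.anchor a) (S.anchor_map_add a)).map_neg φ

lemma anchor_map_sub (a : G) (φ ψ : R) :
    S.anchor a (φ - ψ) = S.anchor a φ - S.anchor a ψ :=
  (AddMonoidHom.mk' (S.anchor a) (S.anchor_map_add a)).map_sub φ ψ

lemma anchor_sub (a b : G) (φ : R) :
    S.anchor (a - b) φ = S.anchor a φ - S.anchor b φ :=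
  (AddMonoidHom.mk' (S.anchor · φ) (S.anchor_add · · φ)).map_sub a b

lemma bracket_sub_left (a b c : G) :
    S.bracket (a - b) c = S.bracket a c - S.bracket b c :=
  (AddMonoidHom.mk' (S.bracket · c) (S.bracket_add_left · · c)).map_sub a b

lemma bracket_neg_left (a b : G) : S.bracket (-a) b = -S.bracket a b :=
  (AddMonoidHom.mk' (S.bracket · b) (S.bracket_add_left · · b)).map_neg a

lemma bracket_smul_left (φ : R) (a b : G) :
    S.bracket (φ • a) b = φ • S.bracket a b - S.anchor b φ • a := by
  rw [S.bracket_skew (φ • a) b, S.leibniz, S.bracket_skew b a]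
  module

lemma lieDeriv_apply (a : G) (α : G →ₗ[R] R) (b : G) :
    S.lieDeriv a α b = S.anchor a (α b) - α (S.bracket a b) :=
  rfl

lemma dform_apply (φ : R) (a : G) : S.dform φ a = S.anchor a φ :=
  rfl

lemma lieDeriv_sub_smul (a x : G) (φ : R) (α : G →ₗ[R] R) :
    S.lieDeriv (a - φ • x) α = S.lieDeriv a α - φ • S.lieDeriv x α - α x • S.dform φ := by
  ext c
  simp only [LinearMap.sub_apply, LinearMap.smul_apply, lieDeriv_apply, dform_apply,
    anchor_sub, S.anchor_smul, bracket_sub_left, bracket_smul_left, map_sub, map_smul,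
    smul_eq_mul]
  ring

/-- The deformed bracket in terms of `♯_{Π,ξ}`: the `ξ`-terms of the Koszul bracket cancel
against those of `L^ρ_ξ`. -/
lemma bracketJ_eq (sharp : (G →ₗ[R] R) → G) (ξ : G) (lam α β : G →ₗ[R] R) :
    S.bracketJ sharp ξ lam α β
      = S.lieDeriv (sharpJ sharp ξ α) β - S.lieDeriv (sharpJ sharp ξ β) α
        - S.dform (biv sharp α β) - β ξ • S.dform (α ξ) + α ξ • S.dform (β ξ)
        - α ξ • β + β ξ • α - biv sharp α β • lam := by
  have hα : sharp α = sharpJ sharp ξ α - α ξ • ξ := by simp [sharpJ]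
  have hβ : sharp β = sharpJ sharp ξ β - β ξ • ξ := by simp [sharpJ]
  rw [bracketJ, koszul, hα, hβ, lieDeriv_sub_smul, lieDeriv_sub_smul]
  module

section Contact

variable (η : G →ₗ[R] R)

lemma dOne_antisymm (a b : G) : S.dOne η a b = -S.dOne η b a := by
  rw [dOne, dOne, S.bracket_skew b a, map_neg]
  ring

lemma dOne_dOne_eq_zero (hJac : S.IsJacobi) (hAL : S.IsAlmostLie) (a b c : G) :
    S.anchor a (S.dOne η b c) - S.anchor b (S.dOne η a c) + S.anchor c (S.dOne η a b)
      - S.dOne η (S.bracket a b) c + S.dOne η (S.bracket a c) b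
      - S.dOne η (S.bracket b c) a = 0 := by
  have hj := congrArg η (hJac a b c)
  simp only [map_add, map_zero] at hj
  have hca : η (S.bracket (S.bracket a c) b) = -η (S.bracket (S.bracket c a) b) := by
    rw [S.bracket_skew a c, bracket_neg_left, map_neg]
  simp only [dOne, anchor_map_sub]
  linear_combination hj - hca - hAL a b (η c) + hAL a c (η b) - hAL b c (η a)

/-- Cartan's formula `L = dι + ιd` together with `d(dη) = 0`, written out for
`e = -ι_· dη + η ⊗ η`. -/
lemma flat_bracket_eq (hJac : S.IsJacobi) (hAL : S.IsAlmostLie) (e : G → G →ₗ[R] R)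
    (he : ∀ a b : G, e a b = -(S.dOne η a b) + η a * η b) (a b : G) :
    e (S.bracket a b)
      = S.lieDeriv a (e b) - S.lieDeriv b (e a) - S.dform (S.dOne η a b)
        - η b • S.dform (η a) + η a • S.dform (η b) - η a • e b + η b • e a
        - S.dOne η a b • η := by
  ext c
  have hd := S.dOne_dOne_eq_zero η hJac hAL a b c
  have hbac := S.dOne_antisymm η b (S.bracket a c)
  have habc := S.dOne_antisymm η a (S.bracket b c)
  have hab : S.dOne η a b = S.anchor a (η b) - S.anchor b (η a) - η (S.bracket a b) := rfl
  have hac : S.dOne η a c = S.anchor a (η c) - S.anchor c (η a) - η (S.bracket a c) := rfl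
  have hbc : S.dOne η b c = S.anchor b (η c) - S.anchor c (η b) - η (S.bracket b c) := rfl
  simp only [LinearMap.sub_apply, LinearMap.add_apply, LinearMap.smul_apply, lieDeriv_apply,
    dform_apply, smul_eq_mul, he, S.anchor_map_add, anchor_map_neg, S.anchor_map_mul]
  linear_combination hd - hbac + habc + η b * hac - η a * hbc + η c * hab

variable (ξ : G) (e : G ≃ₗ[R] (G →ₗ[R] R))
  (he : ∀ a b : G, e a b = -(S.dOne η a b) + η a * η b)
  (hξΩ : ∀ a : G, S.dOne η ξ a = 0) (hηξ : η ξ = 1)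

include he hξΩ hηξ in
lemma flat_apply_reeb (b : G) : e b ξ = η b := by
  rw [he, S.dOne_antisymm η b ξ, hξΩ, hηξ]
  ring

include he hξΩ hηξ in
lemma flat_reeb : e ξ = η := by
  ext x
  rw [he, hξΩ, hηξ]
  ring

include he in
/-- `e` is skew up to `2 η ⊗ η`, so a section killed by every 1-form is killed by `e`. -/
lemma eq_of_forall_dual_apply_eq {x y : G} (h : ∀ β : G →ₗ[R] R, β x = β y) : x = y := by
  have hz : ∀ β : G →ₗ[R] R, β (x - y) = 0 := fun β => by rw [map_sub, h, sub_self]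
  have hez : e (x - y) = 0 := by
    ext b
    have hb := hz (e b)
    rw [he] at hb
    rw [LinearMap.zero_apply, he, S.dOne_antisymm η (x - y) b]
    linear_combination -hb + 2 * η b * hz η
  exact sub_eq_zero.mp (e.map_eq_zero_iff.mp hez)

variable (sP : (G →ₗ[R] R) → G)
  (hsP : ∀ α β : G →ₗ[R] R, β (sP α) = S.dOne η (e.symm α) (e.symm β))

include he hξΩ hηξ hsP in
lemma sharp_flat (a : G) : sP (e a) = a - η a • ξ := by
  refine S.eq_of_forall_dual_apply_eq η e he fun β => ?_
  obtain ⟨b, rfl⟩ := e.surjective β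
  rw [hsP, e.symm_apply_apply, e.symm_apply_apply, map_sub, map_smul,
    S.flat_apply_reeb η ξ e he hξΩ hηξ, he, S.dOne_antisymm η b a, smul_eq_mul]
  ring

include he hξΩ hηξ hsP in
lemma sharpJ_eq_symm : sharpJ sP ξ = e.symm := by
  funext α
  obtain ⟨a, rfl⟩ := e.surjective α
  rw [sharpJ, S.sharp_flat η ξ e he hξΩ hηξ sP hsP, S.flat_apply_reeb η ξ e he hξΩ hηξ,
    e.symm_apply_apply, sub_add_cancel]

include he hξΩ hηξ hsP in
lemma bracketJ_flat (hJac : S.IsJacobi) (hAL : S.IsAlmostLie) (a b : G) :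
    S.bracketJ sP ξ η (e a) (e b) = e (S.bracket a b) := by
  rw [bracketJ_eq, S.sharpJ_eq_symm η ξ e he hξΩ hηξ sP hsP, biv, hsP,
    S.flat_apply_reeb η ξ e he hξΩ hηξ, S.flat_apply_reeb η ξ e he hξΩ hηξ]
  simp only [e.symm_apply_apply]
  exact (S.flat_bracket_eq η hJac hAL e he a b).symm

end Contact

end SkewAlgebroid

open SkewAlgebroid

variable {R : Type*} [CommRing R] {G : Type*} [AddCommGroup G] [Module R G]

/-- for a contact Lie algebroid `(A,ρ,[.,.],η)` with associated Jacobi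
structure `(Π,ξ)`: `♯_{Π,ξ}(η) = ξ`, `♯_{Π,ξ}` intertwines `[.,.]^η_{Π,ξ}` with the
bracket of `A`, and `(A*, ρ_{Π,ξ}, [.,.]^η_{Π,ξ})` is a Lie algebroid. -/
theorem contact_dual_lie_algebroid
    (S : SkewAlgebroid R G) (hJac : S.IsJacobi) (hAL : S.IsAlmostLie)
    (η : G →ₗ[R] R) (ξ : G)
    (hξΩ : ∀ a : G, S.dOne η ξ a = 0) (hηξ : η ξ = 1)
    (e : G ≃ₗ[R] (G →ₗ[R] R))
    (he : ∀ a b : G, e a b = -(S.dOne η a b) + η a * η b)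
    (sP : (G →ₗ[R] R) → G)
    (hsP : ∀ α β : G →ₗ[R] R, β (sP α) = S.dOne η (e.symm α) (e.symm β)) :
    sharpJ sP ξ η = ξ
    ∧ (∀ α β : G →ₗ[R] R,
        sharpJ sP ξ (S.bracketJ sP ξ η α β)
          = S.bracket (sharpJ sP ξ α) (sharpJ sP ξ β))
    ∧ (∀ α β γ : G →ₗ[R] R,
        S.bracketJ sP ξ η (S.bracketJ sP ξ η α β) γ
          + S.bracketJ sP ξ η (S.bracketJ sP ξ η β γ) α
          + S.bracketJ sP ξ η (S.bracketJ sP ξ η γ α) β = 0) := by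
  have hsharp := S.sharpJ_eq_symm η ξ e he hξΩ hηξ sP hsP
  have hbracket : ∀ α β : G →ₗ[R] R,
      S.bracketJ sP ξ η α β = e (S.bracket (e.symm α) (e.symm β)) := fun α β => by
    simpa using S.bracketJ_flat η ξ e he hξΩ hηξ sP hsP hJac hAL (e.symm α) (e.symm β)
  refine ⟨?_, fun α β => ?_, fun α β γ => ?_⟩
  · rw [hsharp, ← S.flat_reeb η ξ e he hξΩ hηξ, e.symm_apply_apply]
  · rw [hsharp, hbracket, e.symm_apply_apply]
  · simp only [hbracket, e.symm_apply_apply]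
    rw [← map_add, ← map_add, hJac, map_zero]
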